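/- The graph of (−1)-classes of the dP_5 lattice has 16 vertices and is strongly regular with parameters (16, 5, 0, 2): every vertex has exactly 5 neighbours, adjacent vertices have no common neighbour (the graph is triangle-free), and non-adjacent vertices have exactly 2 common neighbours (this is the Clebsch graph); its automorphism group has order 1920. -/

import Mathlib

/-!
The sixteen (−1)-classes are `eᵢ`, `l − eᵢ − eⱼ` and `2l − ∑ eᵢ`: Cauchy–Schwarz confines the
coordinates of a (−1)-class to a small box, which is searched exhaustively, and the strong
regularity is then a finite computation.

Isometries of the lattice fixing `K` act on the graph. For orthogonal classes `v`, `w` the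
reflection in the root `v − w` swaps them, and this makes the action transitive. Permuting
`e₁, …, e₅` realises `S₅` inside the stabiliser of the conic class `2l − ∑ eᵢ`, whose neighbours
are the `eᵢ`; this is the whole stabiliser because in a graph with `λ = 0`, `μ = 2` an
automorphism fixing a vertex and its neighbours is trivial. Hence `|Aut| = 16 · 5!`.
-/

namespace Stmt10

/-- Intersection form of the dP₅ lattice `ℤ⁶` with basis `l, e₁, …, e₅`. -/
def dot (x y : Fin 6 → ℤ) : ℤ := x 0 * y 0 - ∑ i : Fin 5, x i.succ * y i.succ

/-- The canonical class `K = -3l + e₁ + ⋯ + e₅`. -/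
def K : Fin 6 → ℤ := fun i => if i = 0 then -3 else 1

theorem dot_comm (x y : Fin 6 → ℤ) : dot x y = dot y x := by
  unfold dot
  congr 1
  · ring
  · exact Finset.sum_congr rfl fun i _ => mul_comm _ _

/-- The type of (−1)-classes of the dP₅ lattice. -/
def NegClass := {v : Fin 6 → ℤ // dot v v = -1 ∧ dot v K = -1}

/-- The graph of (−1)-classes of the dP₅ lattice. -/
def G : SimpleGraph NegClass where
  Adj v w := v ≠ w ∧ 1 ≤ dot v.1 w.1
  symm := ⟨by rintro v w ⟨h1, h2⟩; exact ⟨h1.symm, by rwa [dot_comm]⟩⟩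
  loopless := ⟨fun v h => h.1 rfl⟩

/-- The automorphism group of the graph `G`. -/
def Aut : Subgroup (Equiv.Perm NegClass) where
  carrier := {π | ∀ v w, G.Adj (π v) (π w) ↔ G.Adj v w}
  one_mem' := fun _ _ => Iff.rfl
  mul_mem' := by
    intro a b ha hb v w
    exact (ha (b v) (b w)).trans (hb v w)
  inv_mem' := by
    intro a ha v w
    simpa using (ha (a⁻¹ v) (a⁻¹ w)).symm

end Stmt10

theorem SimpleGraph.Iso.apply_eq_self_of_fixes_neighbors {V : Type*} [Finite V]
    {G : SimpleGraph V} (hlam : ∀ v w, G.Adj v w → {u | G.Adj v u ∧ G.Adj w u}.ncard = 0)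
    (hmu : ∀ v w, v ≠ w → ¬G.Adj v w → {u | G.Adj v u ∧ G.Adj w u}.ncard = 2)
    (φ : G ≃g G) {x : V} (hx : φ x = x) (hN : ∀ y, G.Adj x y → φ y = y) (u : V) : φ u = u := by
  by_cases hux : u = x
  · rw [hux, hx]
  by_cases hxu : G.Adj x u
  · exact hN u hxu
  obtain ⟨k, l, hkl, hcommon⟩ := Set.ncard_eq_two.1 (hmu x u (Ne.symm hux) hxu)
  have hk : k ∈ {w | G.Adj x w ∧ G.Adj u w} := hcommon ▸ Or.inl rfl
  have hl : l ∈ {w | G.Adj x w ∧ G.Adj u w} := hcommon ▸ Or.inr rfl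
  have hkl' : ¬G.Adj k l := fun h =>
    ((Set.ncard_eq_zero (Set.toFinite _)).1 (hlam x k hk.1)).subset ⟨hl.1, h⟩
  -- `u` is the only common neighbour of `k` and `l` besides `x`, and `φ` fixes `x`, `k`, `l`.
  have hkl_common : {x, u} = {w | G.Adj k w ∧ G.Adj l w} :=
    Set.eq_of_subset_of_ncard_le
      (by rintro w (rfl | rfl); exacts [⟨hk.1.symm, hl.1.symm⟩, ⟨hk.2.symm, hl.2.symm⟩])
      (by rw [hmu k l hkl hkl', Set.ncard_pair (Ne.symm hux)])
  have hφu : φ u ∈ {w | G.Adj k w ∧ G.Adj l w} := by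
    refine ⟨?_, ?_⟩
    · rw [← hN k hk.1, φ.map_adj_iff]; exact hk.2.symm
    · rw [← hN l hl.1, φ.map_adj_iff]; exact hl.2.symm
  rw [← hkl_common] at hφu
  rcases hφu with h | h
  · exact absurd (φ.injective (h.trans hx.symm)) hux
  · exact h

namespace Stmt10

lemma dot_add_left (x y z : Fin 6 → ℤ) : dot (x + y) z = dot x z + dot y z := by
  simp only [dot, Pi.add_apply, add_mul, Finset.sum_add_distrib]
  ring

lemma dot_smul_left (c : ℤ) (x y : Fin 6 → ℤ) : dot (c • x) y = c * dot x y := by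
  simp only [dot, Pi.smul_apply, smul_eq_mul, mul_assoc, ← Finset.mul_sum]
  ring

lemma dot_add_right (x y z : Fin 6 → ℤ) : dot x (y + z) = dot x y + dot x z := by
  rw [dot_comm, dot_add_left, dot_comm y, dot_comm z]

lemma dot_smul_right (c : ℤ) (x y : Fin 6 → ℤ) : dot x (c • y) = c * dot x y := by
  rw [dot_comm, dot_smul_left, dot_comm]

section Reflection

def reflection (r : Fin 6 → ℤ) (x : Fin 6 → ℤ) : Fin 6 → ℤ := x + dot x r • r

variable {r : Fin 6 → ℤ}

lemma dot_reflection (hr : dot r r = -2) (x y : Fin 6 → ℤ) :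
    dot (reflection r x) (reflection r y) = dot x y := by
  simp only [reflection, dot_add_left, dot_add_right, dot_smul_left, dot_smul_right, hr,
    dot_comm r y]
  ring

lemma reflection_involutive (hr : dot r r = -2) : Function.Involutive (reflection r) := by
  intro x
  simp only [reflection, dot_add_left, dot_smul_left, hr, add_assoc, ← add_smul]
  ring_nf

lemma reflection_of_dot_eq_zero {x : Fin 6 → ℤ} (hx : dot x r = 0) : reflection r x = x := by
  simp [reflection, hx]

end Reflection

def isometryAut (φ : Equiv.Perm (Fin 6 → ℤ)) (hφ : ∀ x y, dot (φ x) (φ y) = dot x y)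
    (hK : φ K = K) : Aut :=
  ⟨φ.subtypeEquiv fun v => by rw [hφ, ← hφ v K, hK], fun v w => by
    show (_ ≠ _ ∧ 1 ≤ dot (φ v.1) (φ w.1)) ↔ (v ≠ w ∧ 1 ≤ dot v.1 w.1)
    rw [hφ]
    exact and_congr_left' (Equiv.injective _).ne_iff⟩

lemma isometryAut_apply (φ : Equiv.Perm (Fin 6 → ℤ)) (hφ : ∀ x y, dot (φ x) (φ y) = dot x y)
    (hK : φ K = K) (v : NegClass) : ((isometryAut φ hφ hK : Equiv.Perm NegClass) v).1 = φ v.1 :=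
  rfl

-- The reflection in the root `v - w` swaps `v` and `w`.
lemma mem_orbit_of_dot_eq_zero {v w : NegClass} (h : dot v.1 w.1 = 0) :
    w ∈ MulAction.orbit Aut v := by
  have hr : dot (v.1 - w.1) (v.1 - w.1) = -2 := by
    simp only [sub_eq_add_neg, dot_add_left, dot_add_right, ← neg_one_smul ℤ w.1, dot_smul_left,
      dot_smul_right, v.2.1, w.2.1, h, dot_comm w.1]
    norm_num
  have hK : dot K (v.1 - w.1) = 0 := by
    rw [dot_comm]
    simp only [sub_eq_add_neg, dot_add_left, ← neg_one_smul ℤ w.1, dot_smul_left, v.2.2, w.2.2]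
    norm_num
  refine ⟨isometryAut (reflection_involutive hr).toPerm (dot_reflection hr)
    (reflection_of_dot_eq_zero hK), Subtype.ext ?_⟩
  show reflection _ v.1 = w.1
  have : dot v.1 (v.1 - w.1) = -1 := by
    simp only [sub_eq_add_neg, dot_add_right, ← neg_one_smul ℤ w.1, dot_smul_right, v.2.1, h]
    norm_num
  simp [reflection, this]

def negClassVec : Fin 16 → Fin 6 → ℤ :=
  ![![0, 1, 0, 0, 0, 0], ![0, 0, 1, 0, 0, 0], ![0, 0, 0, 1, 0, 0], ![0, 0, 0, 0, 1, 0],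
    ![0, 0, 0, 0, 0, 1], ![1, -1, -1, 0, 0, 0], ![1, -1, 0, -1, 0, 0], ![1, -1, 0, 0, -1, 0],
    ![1, -1, 0, 0, 0, -1], ![1, 0, -1, -1, 0, 0], ![1, 0, -1, 0, -1, 0], ![1, 0, -1, 0, 0, -1],
    ![1, 0, 0, -1, -1, 0], ![1, 0, 0, -1, 0, -1], ![1, 0, 0, 0, -1, -1], ![2, -1, -1, -1, -1, -1]]

lemma negClassVec_mem (i : Fin 16) :
    dot (negClassVec i) (negClassVec i) = -1 ∧ dot (negClassVec i) K = -1 := by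
  revert i
  decide

def classOf (i : Fin 16) : NegClass := ⟨negClassVec i, negClassVec_mem i⟩

lemma classOf_injective : Function.Injective classOf := by
  have h : ∀ i j, negClassVec i = negClassVec j → i = j := by decide
  exact fun i j hij => h i j (congrArg Subtype.val hij)

noncomputable def coordBox : Finset (Fin 6 → ℤ) :=
  Fintype.piFinset fun i => if i = 0 then Finset.Icc (0 : ℤ) 2 else Finset.Icc (-1) 1

lemma mem_coordBox (v : NegClass) : v.1 ∈ coordBox := by
  obtain ⟨v, hvv, hvK⟩ := v
  set a := v 0
  set b : Fin 5 → ℤ := fun i => v i.succ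
  have hsq : ∑ i, b i ^ 2 = a ^ 2 + 1 := by
    simp only [dot, ← sq] at hvv
    linarith
  have hsum : ∑ i, b i = 1 - 3 * a := by
    simp only [dot, K, Fin.succ_ne_zero, if_true, if_false, mul_one] at hvK
    linarith
  have hCS := sq_sum_le_card_mul_sum_sq (s := Finset.univ) (f := b)
  rw [hsq, hsum, Finset.card_univ, Fintype.card_fin, Nat.cast_ofNat] at hCS
  have ha : 0 ≤ a ∧ a ≤ 2 := by constructor <;> nlinarith
  have hle (f : ℤ → ℤ) (hf : ∀ x, 0 ≤ f x) (i : Fin 5) : f (b i) ≤ ∑ j, f (b j) :=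
    Finset.single_le_sum (f := fun j => f (b j)) (fun j _ => hf (b j)) (Finset.mem_univ i)
  -- As `a ∈ {0, 1, 2}`, one of these two sums vanishes, so every `b i` lies in `{-1, 0, 1}`.
  have h₁ : ∑ j, b j * (b j - 1) = a * (a + 3) := by
    simp only [mul_sub, mul_one, Finset.sum_sub_distrib, ← sq, hsq, hsum]
    ring
  have h₂ : ∑ j, b j * (b j + 1) = (a - 1) * (a - 2) := by
    simp only [mul_add, mul_one, Finset.sum_add_distrib, ← sq, hsq, hsum]
    ring
  obtain ⟨ha₀, ha₂⟩ := ha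
  refine Fintype.mem_piFinset.2 fun j => Fin.cases ?_ (fun i => ?_) j
  · simpa using ⟨ha₀, ha₂⟩
  simp only [Fin.succ_ne_zero, if_false, Finset.mem_Icc]
  have hb₁ := hle (fun x => x * (x - 1)) (fun x => by nlinarith [Int.le_self_sq x]) i
  have hb₂ := hle (fun x => x * (x + 1)) (fun x => by nlinarith [Int.le_self_sq (-x)]) i
  simp only [h₁, h₂] at hb₁ hb₂
  interval_cases a <;> constructor <;> nlinarith

set_option maxRecDepth 10000 in
lemma exists_negClassVec_eq_of_mem_coordBox : ∀ v ∈ coordBox,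
    dot v v = -1 → dot v K = -1 → ∃ i, negClassVec i = v := by
  decide

lemma classOf_surjective : Function.Surjective classOf := by
  intro v
  obtain ⟨i, hi⟩ := exists_negClassVec_eq_of_mem_coordBox v.1 (mem_coordBox v) v.2.1 v.2.2
  exact ⟨i, Subtype.ext hi⟩

instance : Finite NegClass := Finite.of_surjective classOf classOf_surjective

theorem card_negClass : Nat.card NegClass = 16 := by
  rw [← Nat.card_congr (Equiv.ofBijective _ ⟨classOf_injective, classOf_surjective⟩)]
  simp

lemma adj_classOf_iff (i j : Fin 16) :
    G.Adj (classOf i) (classOf j) ↔ i ≠ j ∧ 1 ≤ dot (negClassVec i) (negClassVec j) :=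
  and_congr_left' classOf_injective.ne_iff

lemma ncard_eq_card_filter {s : Set NegClass} (p : Fin 16 → Prop) [DecidablePred p]
    (hp : ∀ i, classOf i ∈ s ↔ p i) : s.ncard = (Finset.univ.filter p).card := by
  rw [← Set.ncard_coe_finset, ← Set.ncard_image_of_injective _ classOf_injective]
  congr 1
  ext v
  obtain ⟨i, rfl⟩ := classOf_surjective v
  simp [hp, classOf_injective.eq_iff]

theorem ncard_neighborSet (v : NegClass) : {w | G.Adj v w}.ncard = 5 := by
  obtain ⟨i, rfl⟩ := classOf_surjective v
  rw [ncard_eq_card_filter _ fun j => adj_classOf_iff i j]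
  revert i
  decide

theorem ncard_commonNeighbors_of_adj (v w : NegClass) (h : G.Adj v w) :
    {u | G.Adj v u ∧ G.Adj w u}.ncard = 0 := by
  obtain ⟨i, rfl⟩ := classOf_surjective v
  obtain ⟨j, rfl⟩ := classOf_surjective w
  rw [adj_classOf_iff] at h
  rw [ncard_eq_card_filter _ fun k => and_congr (adj_classOf_iff i k) (adj_classOf_iff j k)]
  revert i j
  decide

theorem ncard_commonNeighbors_of_not_adj (v w : NegClass) (hne : v ≠ w) (h : ¬G.Adj v w) :
    {u | G.Adj v u ∧ G.Adj w u}.ncard = 2 := by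
  obtain ⟨i, rfl⟩ := classOf_surjective v
  obtain ⟨j, rfl⟩ := classOf_surjective w
  rw [adj_classOf_iff] at h
  rw [classOf_injective.ne_iff] at hne
  rw [ncard_eq_card_filter _ fun k => and_congr (adj_classOf_iff i k) (adj_classOf_iff j k)]
  revert i j
  decide

def coordPerm (σ : Equiv.Perm (Fin 5)) : Equiv.Perm (Fin 6 → ℤ) :=
  Equiv.arrowCongr (Equiv.Perm.decomposeFin.symm (0, σ)).symm (Equiv.refl ℤ)

lemma coordPerm_apply_zero (σ : Equiv.Perm (Fin 5)) (x : Fin 6 → ℤ) : coordPerm σ x 0 = x 0 := by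
  simp [coordPerm]

lemma coordPerm_apply_succ (σ : Equiv.Perm (Fin 5)) (x : Fin 6 → ℤ) (i : Fin 5) :
    coordPerm σ x i.succ = x (σ i).succ := by
  simp [coordPerm]

lemma dot_coordPerm (σ : Equiv.Perm (Fin 5)) (x y : Fin 6 → ℤ) :
    dot (coordPerm σ x) (coordPerm σ y) = dot x y := by
  simp only [dot, coordPerm_apply_zero, coordPerm_apply_succ]
  rw [Equiv.sum_comp σ fun i => x i.succ * y i.succ]

lemma coordPerm_ite (σ : Equiv.Perm (Fin 5)) (a b : ℤ) :
    coordPerm σ (fun j => if j = 0 then a else b) = fun j => if j = 0 then a else b := by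
  funext j
  refine Fin.cases ?_ (fun i => ?_) j
  · rw [coordPerm_apply_zero]
  · simp [coordPerm_apply_succ, Fin.succ_ne_zero]

lemma coordPerm_single (σ : Equiv.Perm (Fin 5)) (i : Fin 5) :
    coordPerm σ (Pi.single i.succ 1) = Pi.single (σ.symm i).succ 1 := by
  funext j
  refine Fin.cases ?_ (fun k => ?_) j
  · simp [coordPerm_apply_zero, (Fin.succ_ne_zero _).symm]
  · simp [coordPerm_apply_succ, Pi.single_apply, Equiv.eq_symm_apply]

def permAut (σ : Equiv.Perm (Fin 5)) : Aut :=
  isometryAut (coordPerm σ) (dot_coordPerm σ) (coordPerm_ite σ (-3) 1)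

def conicClass : NegClass := classOf 15

def exceptionalClass (i : Fin 5) : NegClass := classOf (Fin.castLE (by norm_num) i)

lemma exceptionalClass_injective : Function.Injective exceptionalClass :=
  classOf_injective.comp (Fin.castLE_injective _)

lemma conicClass_val : conicClass.1 = fun j => if j = 0 then 2 else -1 := by
  funext j
  revert j
  decide

lemma exceptionalClass_val (i : Fin 5) : (exceptionalClass i).1 = Pi.single i.succ 1 := by
  funext j
  revert i j
  decide

lemma adj_conicClass_iff (w : NegClass) : G.Adj conicClass w ↔ ∃ i, w = exceptionalClass i := by
  obtain ⟨j, rfl⟩ := classOf_surjective w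
  simp only [conicClass, exceptionalClass, adj_classOf_iff, classOf_injective.eq_iff]
  revert j
  decide

lemma permAut_smul_conicClass (σ : Equiv.Perm (Fin 5)) : permAut σ • conicClass = conicClass :=
  Subtype.ext ((isometryAut_apply ..).trans (by rw [conicClass_val, coordPerm_ite]))

lemma permAut_smul_exceptionalClass (σ : Equiv.Perm (Fin 5)) (i : Fin 5) :
    permAut σ • exceptionalClass i = exceptionalClass (σ.symm i) :=
  Subtype.ext ((isometryAut_apply ..).trans
    (by rw [exceptionalClass_val, exceptionalClass_val, coordPerm_single]))

lemma aut_eq_of_agree_on_conic_and_exceptional {π ρ : Aut}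
    (hconic : π • conicClass = ρ • conicClass)
    (hexc : ∀ i, π • exceptionalClass i = ρ • exceptionalClass i) : π = ρ := by
  have hfix : ∀ u, (ρ⁻¹ * π) • u = u :=
    SimpleGraph.Iso.apply_eq_self_of_fixes_neighbors ncard_commonNeighbors_of_adj
      ncard_commonNeighbors_of_not_adj ⟨(ρ⁻¹ * π).1, (ρ⁻¹ * π).2 _ _⟩ (x := conicClass)
      (show (ρ⁻¹ * π) • conicClass = conicClass by rw [mul_smul, inv_smul_eq_iff, hconic])
      (fun y hy => by
        obtain ⟨i, rfl⟩ := (adj_conicClass_iff y).1 hy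
        show (ρ⁻¹ * π) • exceptionalClass i = exceptionalClass i
        rw [mul_smul, inv_smul_eq_iff, hexc])
  exact Subtype.ext (Equiv.ext fun u => inv_smul_eq_iff.1 ((mul_smul _ _ _).symm.trans (hfix u)))

lemma exists_smul_exceptionalClass_eq {π : Aut} (hπ : π • conicClass = conicClass) (i : Fin 5) :
    ∃ j, π • exceptionalClass i = exceptionalClass j := by
  have h : G.Adj (π • conicClass) (π • exceptionalClass i) :=
    (π.2 _ _).2 ((adj_conicClass_iff _).2 ⟨i, rfl⟩)
  rw [hπ] at h
  exact (adj_conicClass_iff _).1 h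

def permStabilizer (σ : Equiv.Perm (Fin 5)) : MulAction.stabilizer Aut conicClass :=
  ⟨permAut σ, permAut_smul_conicClass σ⟩

lemma permStabilizer_injective : Function.Injective permStabilizer := by
  intro σ τ h
  refine Equiv.ext fun i => ?_
  have h' := congrArg (fun π : MulAction.stabilizer Aut conicClass =>
    (π : Aut) • exceptionalClass (σ i)) h
  simp only [permStabilizer, permAut_smul_exceptionalClass, Equiv.symm_apply_apply] at h'
  exact τ.symm_apply_eq.1 (exceptionalClass_injective h').symm

lemma permStabilizer_surjective : Function.Surjective permStabilizer := by
  rintro ⟨π, hπ⟩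
  rw [MulAction.mem_stabilizer_iff] at hπ
  choose f hf using exists_smul_exceptionalClass_eq hπ
  have hf_inj : Function.Injective f := fun i j hij =>
    exceptionalClass_injective (MulAction.injective π (show π • _ = π • _ by rw [hf, hf, hij]))
  refine ⟨(Equiv.ofBijective f (Finite.injective_iff_bijective.1 hf_inj)).symm,
    Subtype.ext (aut_eq_of_agree_on_conic_and_exceptional ?_ fun i => ?_)⟩
  · exact (permAut_smul_conicClass _).trans hπ.symm
  · show permAut _ • _ = π • _
    rw [permAut_smul_exceptionalClass, hf, Equiv.symm_symm, Equiv.ofBijective_apply]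

instance : MulAction.IsPretransitive Aut NegClass := by
  rw [MulAction.isPretransitive_iff_orbit_eq_univ conicClass, Set.eq_univ_iff_forall]
  intro v
  obtain ⟨i, rfl⟩ := classOf_surjective v
  have hpath : ∀ i, ∃ j, dot (negClassVec 15) (negClassVec j) = 0 ∧
      dot (negClassVec j) (negClassVec i) = 0 := by decide
  obtain ⟨j, h₁, h₂⟩ := hpath i
  rw [← MulAction.orbit_eq_iff.2 (mem_orbit_of_dot_eq_zero (v := conicClass) (w := classOf j) h₁)]
  exact mem_orbit_of_dot_eq_zero h₂

theorem card_aut : Nat.card Aut = 1920 := by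
  rw [← (MulAction.stabilizer Aut conicClass).card_mul_index,
    MulAction.index_stabilizer_of_transitive, card_negClass,
    ← Nat.card_eq_of_bijective _ ⟨permStabilizer_injective, permStabilizer_surjective⟩]
  simp [Fintype.card_perm, Nat.factorial]

/-- The graph of (−1)-classes of the dP₅ lattice has 16 vertices and is strongly
regular with parameters (16, 5, 0, 2): every vertex has exactly 5 neighbours,
adjacent vertices have no common neighbour, and distinct non-adjacent vertices have
exactly 2 common neighbours (this is the Clebsch graph); its automorphism group has
order 1920. -/
theorem statement10 :
    Nat.card NegClass = 16 ∧
    (∀ v : NegClass, {w | G.Adj v w}.ncard = 5) ∧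
    (∀ v w : NegClass, G.Adj v w → {u | G.Adj v u ∧ G.Adj w u}.ncard = 0) ∧
    (∀ v w : NegClass, v ≠ w → ¬ G.Adj v w → {u | G.Adj v u ∧ G.Adj w u}.ncard = 2) ∧
    Nat.card ↥Aut = 1920 :=
  ⟨card_negClass, ncard_neighborSet, ncard_commonNeighbors_of_adj,
    ncard_commonNeighbors_of_not_adj, card_aut⟩

end Stmt10
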